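/- arXiv:math/0701364 — 2 statements merged into one kernel-verified Lean document; each statement's English description precedes it below -/
import Mathlib

section
/- Let 𝒢 = (G, o, R_1, …, R_n) be a functional Menger system of rank n, let H ⊆ G be a quasi-stable l-unitary normal v-complex, and let U ⊆ G satisfy H ⊆ U, R_i U ⊆ H, R_i(G∖U) ⊆ G∖U for every i ∈ {1,…,n}, and the condition: x, y ∈ H and t(x) ∈ U imply t(y) ∈ U for all t ∈ T_n(G). Let E = E_H ∩ E_U, where E_X = {(x,y) : for all t ∈ T_n(G), t(x) ∈ X ⇔ t(y) ∈ X}, and let W = G∖U. Then for every g ∈ G and every i ∈ {1,…,n}: dom P_{(E,W)}(R_i g) = dom P_{(E,W)}(g), and P_{(E,W)}(R_i g) = R_i P_{(E,W)}(g). -/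
/-!
Since `H ⊆ U`, `Rᵢ U ⊆ H` and `Rᵢ (G∖U) ⊆ G∖U`, membership `x ∈ U` is equivalent to `Rᵢ x ∈ H`.
As `H` is a quasi-stable, l-unitary normal v-complex, right translation by `R̄y` with `y ∈ U`
preserves membership in `H`, hence in `U`; every `t ∈ Tₙ(G)` commutes with such translations,
so `x E x[R̄y]`. Now `Rⱼ (Rᵢ g)[h̄] = Rⱼ g[h̄]` gives `(Rᵢ g)[h̄] ∈ U ↔ g[h̄] ∈ U`, i.e. the two
domains agree, and on the domain `(Rᵢ g)[h̄] = hᵢ[R̄ g[h̄]]` is `E`-equivalent to `hᵢ`, so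
`(Rᵢ g)[H_{a₁}…H_{aₙ}] ⊆ H_{aᵢ}`.
-/

universe u

/-- A functional Menger system of rank `n`: an `(n+1)`-ary operation `o`
(written `x[y₁…yₙ]` in the paper) and `n` unary operations `R i`,
satisfying axioms A1–A7. -/
structure MengerSystem (n : ℕ) (G : Type u) where
  o : G → (Fin n → G) → G
  R : Fin n → G → G
  A1 : ∀ (x : G) (y z : Fin n → G),
    o (o x y) z = o x fun i => o (y i) z
  A2 : ∀ x : G, o x (fun i => R i x) = x
  A3 : ∀ (x : G) (u : Fin n → G) (i : Fin n) (z y : G),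
    o (o x (Function.update u i z)) (fun j => R j y)
      = o x (Function.update u i (o z fun j => R j y))
  A4 : ∀ (i : Fin n) (x y : G),
    R i (o x fun j => R j y) = o (R i x) fun j => R j y
  A5 : ∀ (x y z : G),
    o (o x fun j => R j y) (fun j => R j z)
      = o (o x fun j => R j z) (fun j => R j y)
  A6 : ∀ (i k : Fin n) (x : G) (y : Fin n → G),
    R i (o x y) = R i (o (R k x) y)
  A7 : ∀ (i : Fin n) (x : G) (y : Fin n → G),
    o (R i x) y = o (y i) fun j => R j (o x y)

namespace MengerSystem

variable {n : ℕ} {G : Type u}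

/-- `T_n(G)`: the least set of transformations of `G` containing the identity and
closed under `t ↦ (x ↦ a[b̄|ᵢ t x])` and `t ↦ (x ↦ Rᵢ (t x))`. -/
inductive IsTn (M : MengerSystem n G) : (G → G) → Prop
  | id : IsTn M id
  | op (t : G → G) (a : G) (b : Fin n → G) (i : Fin n) :
      IsTn M t → IsTn M fun x => M.o a (Function.update b i (t x))
  | proj (t : G → G) (i : Fin n) :
      IsTn M t → IsTn M fun x => M.R i (t x)

/-- quasi-stable: `x ∈ H → x[x…x] ∈ H`. -/
def QuasiStable (M : MengerSystem n G) (H : Set G) : Prop :=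
  ∀ x ∈ H, M.o x (fun _ => x) ∈ H

/-- l-unitary: `x[y…y] ∈ H ∧ y ∈ H → x ∈ H`. -/
def LUnitary (M : MengerSystem n G) (H : Set G) : Prop :=
  ∀ x y : G, M.o x (fun _ => y) ∈ H → y ∈ H → x ∈ H

/-- normal v-complex: `x, y ∈ H ∧ t x ∈ H → t y ∈ H` for all `t ∈ T_n(G)`. -/
def NormalVComplex (M : MengerSystem n G) (H : Set G) : Prop :=
  ∀ t : G → G, M.IsTn t → ∀ x ∈ H, ∀ y ∈ H, t x ∈ H → t y ∈ H

/-- stable: `x, y₁, …, yₙ ∈ H → x[y₁…yₙ] ∈ H`. -/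
def Stable (M : MengerSystem n G) (H : Set G) : Prop :=
  ∀ (x : G) (y : Fin n → G), x ∈ H → (∀ i, y i ∈ H) → M.o x y ∈ H

/-- v-unitary: `x[y₁…yₙ] ∈ H ∧ y₁, …, yₙ ∈ H → x ∈ H`. -/
def VUnitary (M : MengerSystem n G) (H : Set G) : Prop :=
  ∀ (x : G) (y : Fin n → G), M.o x y ∈ H → (∀ i, y i ∈ H) → x ∈ H

/-- l-ideal: `x[y₁…yₙ] ∈ H` whenever some `yᵢ ∈ H`. -/
def LIdeal (M : MengerSystem n G) (H : Set G) : Prop :=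
  ∀ (x : G) (y : Fin n → G), (∃ i, y i ∈ H) → M.o x y ∈ H

/-- the order `x ≤ y ↔ x = y[R₁x…Rₙx]` (the relation ζ). -/
def le (M : MengerSystem n G) (x y : G) : Prop :=
  x = M.o y fun i => M.R i x

/-- the quasi-order `x ⊏ y ↔ R₁x ≤ R₁y` (the relation χ). -/
def sub (M : MengerSystem n G) [NeZero n] (x y : G) : Prop :=
  M.le (M.R 0 x) (M.R 0 y)

/-- v-regular binary relation. -/
def VRegular (M : MengerSystem n G) (ρ : G → G → Prop) : Prop :=
  ∀ (z : G) (x y : Fin n → G), (∀ i, ρ (x i) (y i)) → ρ (M.o z x) (M.o z y)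

end MengerSystem

/-- An `n`-place function on `A`: a partial map from `Aⁿ` to `A`. -/
def NPlace (n : ℕ) (A : Type u) : Type u := (Fin n → A) → Part A

namespace NPlace

variable {n : ℕ} {A : Type u}

/-- Menger composition `f[g₁…gₙ]` of `n`-place functions. -/
def comp (f : NPlace n A) (g : Fin n → NPlace n A) : NPlace n A :=
  fun a =>
    (⟨∀ i, (g i a).Dom, fun h i => (g i a).get (h i)⟩ : Part (Fin n → A)).bind f

/-- `Rᵢ f`: same domain as `f`, value `(Rᵢ f)(a₁,…,aₙ) = aᵢ`. -/
def Ri (i : Fin n) (f : NPlace n A) : NPlace n A :=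
  fun a => (f a).map fun _ => a i

/-- Set-theoretic intersection of two `n`-place functions (as sets of pairs). -/
def inter (f g : NPlace n A) : NPlace n A :=
  fun a => ⟨(f a).Dom ∧ f a = g a, fun h => (f a).get h.1⟩

end NPlace

/-- A representation of a functional Menger system by `n`-place functions. -/
def MengerSystem.IsRep {n : ℕ} {G : Type u} (M : MengerSystem n G) {A : Type u}
    (P : G → NPlace n A) : Prop :=
  (∀ (x : G) (y : Fin n → G), P (M.o x y) = NPlace.comp (P x) fun i => P (y i)) ∧
  (∀ (i : Fin n) (x : G), P (M.R i x) = NPlace.Ri i (P x))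

/-- A nonempty `H ⊆ G` is a stabilizer of `M` if there are a representation `P`
on some set `A` and a point `a ∈ A` with `H = {g | P g (a,…,a) = a}`. -/
def MengerSystem.IsStabilizer {n : ℕ} {G : Type u} (M : MengerSystem n G)
    (H : Set G) : Prop :=
  ∃ (A : Type u) (P : G → NPlace n A) (a : A),
    M.IsRep P ∧ H = {g : G | a ∈ P g fun _ => a}

/-- The equivalence class of `x` modulo the relation `E`. -/
def eClass {G : Type u} (E : G → G → Prop) (x : G) : Set G := {y | E x y}

/-- The index set `A_E`: `E`-classes different from `W`. -/
def AE {G : Type u} (E : G → G → Prop) (W : Set G) : Type u :=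
  {S : Set G // (∃ x : G, S = eClass E x) ∧ S ≠ W}

/-- The set `g[H_{a₁}…H_{aₙ}]` of all values `g[h₁…hₙ]` with `hᵢ ∈ H_{aᵢ}`. -/
def MengerSystem.im {n : ℕ} {G : Type u} (M : MengerSystem n G)
    {E : G → G → Prop} {W : Set G} (g : G) (a : Fin n → AE E W) : Set G :=
  {z | ∃ h : Fin n → G, (∀ i, h i ∈ (a i).1) ∧ z = M.o g h}

theorem Equivalence.and {α : Sort*} {r s : α → α → Prop} (hr : Equivalence r)
    (hs : Equivalence s) : Equivalence fun x y => r x y ∧ s x y :=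
  ⟨fun x => ⟨hr.refl x, hs.refl x⟩, fun h => ⟨hr.symm h.1, hs.symm h.2⟩,
    fun h k => ⟨hr.trans h.1 k.1, hs.trans h.2 k.2⟩⟩

namespace AE

variable {G : Type u} {E : G → G → Prop} {W : Set G}

theorem nonempty (hE : Equivalence E) (a : AE E W) : a.1.Nonempty := by
  obtain ⟨x, hx⟩ := a.2.1
  exact ⟨x, hx ▸ hE.refl x⟩

theorem mem_of_mem_of_rel (hE : Equivalence E) (a : AE E W) {x z : G} (hx : x ∈ a.1)
    (hxz : E x z) : z ∈ a.1 := by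
  obtain ⟨x₀, hx₀⟩ := a.2.1
  rw [hx₀] at hx ⊢
  exact hE.trans hx hxz

theorem eq_of_mem_of_mem (hE : Equivalence E) {a b : AE E W} {z : G} (ha : z ∈ a.1)
    (hb : z ∈ b.1) : a = b := by
  obtain ⟨xa, hxa⟩ := a.2.1
  obtain ⟨xb, hxb⟩ := b.2.1
  refine Subtype.ext (hxa.trans (Eq.trans ?_ hxb.symm))
  rw [hxa] at ha
  rw [hxb] at hb
  ext y
  exact ⟨fun hy => hE.trans hb (hE.trans (hE.symm ha) hy),
    fun hy => hE.trans ha (hE.trans (hE.symm hb) hy)⟩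

theorem subset_iff_eq (hE : Equivalence E) {S : Set G} (hS : S.Nonempty) {a b : AE E W}
    (hSa : S ⊆ a.1) : S ⊆ b.1 ↔ a = b := by
  obtain ⟨z, hz⟩ := hS
  exact ⟨fun hSb => eq_of_mem_of_mem hE (hSa hz) (hSb hz), fun hab => hab ▸ hSa⟩

end AE

theorem NPlace.mem_Ri_iff {n : ℕ} {A : Type u} (i : Fin n) (f : NPlace n A) (a : Fin n → A)
    (b : A) : b ∈ NPlace.Ri i f a ↔ (f a).Dom ∧ a i = b := by
  rw [NPlace.Ri, Part.mem_map_iff, Part.dom_iff_mem]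
  exact ⟨fun ⟨c, hc, h⟩ => ⟨⟨c, hc⟩, h⟩, fun ⟨⟨c, hc⟩, h⟩ => ⟨c, hc, h⟩⟩

namespace MengerSystem

variable {n : ℕ} {G : Type u} (M : MengerSystem n G)

/-- The relation `E_X` of the paper. -/
def TnEquiv (X : Set G) (x y : G) : Prop :=
  ∀ t : G → G, M.IsTn t → (t x ∈ X ↔ t y ∈ X)

theorem tnEquiv_equivalence (X : Set G) : Equivalence (M.TnEquiv X) :=
  ⟨fun _ _ _ => Iff.rfl, fun h t ht => (h t ht).symm,
    fun h k t ht => (h t ht).trans (k t ht)⟩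

variable {M}

theorem IsTn.map_o_R {t : G → G} (ht : M.IsTn t) (x y : G) :
    t (M.o x fun j => M.R j y) = M.o (t x) fun j => M.R j y := by
  induction ht with
  | id => rfl
  | op t a b i _ ih => simp only [ih, M.A3]
  | proj t i _ ih => simp only [ih, M.A4]

theorem tnEquiv_o_R {X : Set G} {y : G} (hX : ∀ z, (M.o z fun j => M.R j y) ∈ X ↔ z ∈ X)
    (x : G) : M.TnEquiv X x (M.o x fun j => M.R j y) := fun t ht => by
  rw [ht.map_o_R, hX]

theorem NormalVComplex.o_mem_of_o_mem {H : Set G} (hnc : M.NormalVComplex H) {z : G}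
    {u v : Fin n → G} (hu : ∀ j, u j ∈ H) (hv : ∀ j, v j ∈ H) (h : M.o z u ∈ H) :
    M.o z v ∈ H := by
  classical
  suffices ∀ s : Finset (Fin n), M.o z (s.piecewise v u) ∈ H by
    simpa using this Finset.univ
  intro s
  induction s using Finset.induction_on with
  | empty => simpa using h
  | insert j s hj ih =>
    rw [Finset.piecewise_insert]
    refine hnc _ (.op id z (s.piecewise v u) j .id) (u j) (hu j) (v j) (hv j) ?_
    rwa [← s.piecewise_eq_of_notMem v u hj, id_eq, Function.update_eq_self]

theorem o_R_mem_iff_of_R_mem {H : Set G} (hqs : M.QuasiStable H) (hlu : M.LUnitary H)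
    (hnc : M.NormalVComplex H) {y : G} (hy : ∀ j, M.R j y ∈ H) (z : G) :
    (M.o z fun j => M.R j y) ∈ H ↔ z ∈ H :=
  ⟨fun h => hlu z _ (hnc.o_mem_of_o_mem hy (fun _ => h) h) h,
    fun hz => hnc.o_mem_of_o_mem (fun _ => hz) hy (hqs z hz)⟩

section

variable {H U : Set G} (hHU : H ⊆ U) (hRU : ∀ i : Fin n, ∀ x ∈ U, M.R i x ∈ H)
  (hRU' : ∀ i : Fin n, ∀ x ∈ Uᶜ, M.R i x ∈ Uᶜ)
include hHU hRU hRU'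

theorem mem_iff_R_mem (i : Fin n) (x : G) : x ∈ U ↔ M.R i x ∈ H :=
  ⟨hRU i x, fun h => by_contra fun hx => hRU' i x hx (hHU h)⟩

theorem o_R_mem_iff (i : Fin n) (g : G) (h : Fin n → G) :
    M.o (M.R i g) h ∈ U ↔ M.o g h ∈ U := by
  rw [mem_iff_R_mem hHU hRU hRU' i, mem_iff_R_mem hHU hRU hRU' i (M.o g h), ← M.A6]

theorem o_R_mem_iff_of_mem [NeZero n] (hqs : M.QuasiStable H) (hlu : M.LUnitary H)
    (hnc : M.NormalVComplex H) {y : G} (hyU : y ∈ U) (z : G) :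
    (M.o z fun j => M.R j y) ∈ U ↔ z ∈ U := by
  rw [mem_iff_R_mem hHU hRU hRU' 0, M.A4, mem_iff_R_mem hHU hRU hRU' 0 z]
  exact o_R_mem_iff_of_R_mem hqs hlu hnc (fun j => hRU j y hyU) _

end

theorem im_subset_iff {E : G → G → Prop} {W : Set G} (g : G) (a : Fin n → AE E W) (S : Set G) :
    M.im g a ⊆ S ↔ ∀ h : Fin n → G, (∀ j, h j ∈ (a j).1) → M.o g h ∈ S :=
  ⟨fun hS h hh => hS ⟨h, hh, rfl⟩, fun hS _ ⟨h, hh, hz⟩ => hz ▸ hS h hh⟩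

theorem im_nonempty {E : G → G → Prop} {W : Set G} (hE : Equivalence E) (g : G)
    (a : Fin n → AE E W) : (M.im g a).Nonempty := by
  choose h hh using fun j => (a j).nonempty hE
  exact ⟨_, h, hh, rfl⟩

theorem im_R_subset {E : G → G → Prop} {W U : Set G} (hE : Equivalence E)
    (hER : ∀ x y, y ∈ U → E x (M.o x fun j => M.R j y)) {g : G} {a : Fin n → AE E W}
    (hU : M.im g a ⊆ U) (i : Fin n) : M.im (M.R i g) a ⊆ (a i).1 := by
  rw [im_subset_iff] at hU ⊢
  intro h hh
  rw [M.A7]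
  exact (a i).mem_of_mem_of_rel hE (hh i) (hER _ _ (hU h hh))

end MengerSystem

open MengerSystem

theorem simplestRep_Ri_general {n : ℕ} {G : Type u} (M : MengerSystem n G)
    (H U : Set G)
    (hqs : M.QuasiStable H) (hlu : M.LUnitary H) (hnc : M.NormalVComplex H)
    (hHU : H ⊆ U) (hRU : ∀ i : Fin n, ∀ x ∈ U, M.R i x ∈ H)
    (hRU' : ∀ i : Fin n, ∀ x ∈ Uᶜ, M.R i x ∈ Uᶜ)
    (E : G → G → Prop)
    (hE : ∀ x y : G, E x y ↔
      ((∀ t : G → G, M.IsTn t → (t x ∈ H ↔ t y ∈ H)) ∧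
       (∀ t : G → G, M.IsTn t → (t x ∈ U ↔ t y ∈ U))))
    (P : G → NPlace n (AE E Uᶜ))
    (hP : ∀ (g : G) (a : Fin n → AE E Uᶜ),
      ((P g a).Dom ↔ M.im g a ∩ Uᶜ = ∅) ∧
      ∀ b : AE E Uᶜ, b ∈ P g a ↔ (M.im g a ∩ Uᶜ = ∅ ∧ M.im g a ⊆ b.1)) :
    ∀ (g : G) (i : Fin n),
      (∀ a : Fin n → AE E Uᶜ, (P (M.R i g) a).Dom ↔ (P g a).Dom) ∧
      P (M.R i g) = NPlace.Ri i (P g) := by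
  have hEquiv : Equivalence E := by
    convert Equivalence.and (M.tnEquiv_equivalence H) (M.tnEquiv_equivalence U)
    exact hE _ _
  intro g i
  have := NeZero.of_pos i.pos
  have hER : ∀ x y, y ∈ U → E x (M.o x fun j => M.R j y) := fun x y hy =>
    (hE _ _).2 ⟨tnEquiv_o_R (o_R_mem_iff_of_R_mem hqs hlu hnc fun j => hRU j y hy) x,
      tnEquiv_o_R (o_R_mem_iff_of_mem hHU hRU hRU' hqs hlu hnc hy) x⟩
  have hP' : ∀ f a, ((P f a).Dom ↔ M.im f a ⊆ U) ∧
      ∀ b, b ∈ P f a ↔ M.im f a ⊆ U ∧ M.im f a ⊆ b.1 := fun f a => by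
    simpa only [← Set.disjoint_iff_inter_eq_empty, Set.disjoint_compl_right_iff_subset]
      using hP f a
  have hIm : ∀ a : Fin n → AE E Uᶜ, M.im (M.R i g) a ⊆ U ↔ M.im g a ⊆ U := fun a => by
    simp only [im_subset_iff, o_R_mem_iff hHU hRU hRU']
  have hDom : ∀ a : Fin n → AE E Uᶜ, (P (M.R i g) a).Dom ↔ (P g a).Dom := fun a => by
    rw [(hP' _ a).1, (hP' g a).1, hIm]
  refine ⟨hDom, funext fun a => Part.ext fun b => ?_⟩
  rw [NPlace.mem_Ri_iff, (hP' _ a).2, (hP' g a).1, hIm]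
  exact and_congr_right fun hU => AE.subset_iff_eq hEquiv (M.im_nonempty hEquiv _ a)
    (M.im_R_subset hEquiv hER hU i)

/-- For `E = E_H ∩ E_U` and `W = G∖U`, the simplest representation satisfies
`dom P(Rᵢ g) = dom P(g)` and `P(Rᵢ g) = Rᵢ P(g)`. -/
theorem simplestRep_Ri {n : ℕ} {G : Type u} (M : MengerSystem n G)
    (H U : Set G)
    (hqs : M.QuasiStable H) (hlu : M.LUnitary H) (hnc : M.NormalVComplex H)
    (hHU : H ⊆ U) (hRU : ∀ i : Fin n, ∀ x ∈ U, M.R i x ∈ H)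
    (hRU' : ∀ i : Fin n, ∀ x ∈ Uᶜ, M.R i x ∈ Uᶜ)
    (hf1 : ∀ (x y : G) (t : G → G), M.IsTn t →
      x ∈ H → y ∈ H → t x ∈ U → t y ∈ U)
    (E : G → G → Prop)
    (hE : ∀ x y : G, E x y ↔
      ((∀ t : G → G, M.IsTn t → (t x ∈ H ↔ t y ∈ H)) ∧
       (∀ t : G → G, M.IsTn t → (t x ∈ U ↔ t y ∈ U))))
    (P : G → NPlace n (AE E Uᶜ))
    (hP : ∀ (g : G) (a : Fin n → AE E Uᶜ),
      ((P g a).Dom ↔ M.im g a ∩ Uᶜ = ∅) ∧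
      ∀ b : AE E Uᶜ, b ∈ P g a ↔ (M.im g a ∩ Uᶜ = ∅ ∧ M.im g a ⊆ b.1)) :
    ∀ (g : G) (i : Fin n),
      (∀ a : Fin n → AE E Uᶜ, (P (M.R i g) a).Dom ↔ (P g a).Dom) ∧
      P (M.R i g) = NPlace.Ri i (P g) :=
  simplestRep_Ri_general M H U hqs hlu hnc hHU hRU hRU' E hE P hP
end

section
/- Let 𝒢 = (G, o, R_1, …, R_n) be a functional Menger system of rank n and let H ⊆ G be a stable v-unitary subset with R_i H ⊆ H for every i ∈ {1,…,n}. Let χ(H) = {x ∈ G : there exists h ∈ H with h ⊏ x}. Then for all x, y ∈ G: (i) if x ∈ χ(H) and y ∈ H, then y[R_1x…R_nx] ∈ H; (ii) if x ∈ χ(H) and y ∈ χ(H), then y[R_1x…R_nx] ∈ χ(H). -/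
universe u

/-!
If `h ⊏ x`, then `(Rᵢ x)[R₁h…Rₙh] = Rᵢ h` for every `i`, so restricting by `R̄x` and then by
`R̄h` is the same as restricting by `R̄h` alone. For (i), `y[R̄x][R̄h] = y[R̄h] ∈ H` with
`R̄h ∈ H`, so v-unitarity gives `y[R̄x] ∈ H`. For (ii), with `h_y ⊏ y` and `h_x ⊏ x` in `H`,
the element `h_y[R̄h_x] ∈ H` witnesses `y[R̄x] ∈ χ(H)`: the two restrictions commute by A5.
-/

namespace MengerSystem

variable {n : ℕ} {G : Type u} (M : MengerSystem n G)

lemma R_R (i k : Fin n) (x : G) : M.R i (M.R k x) = M.R i x := by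
  have h := M.A6 i k x fun j => M.R j x
  rwa [M.A2, ← M.A4, M.A2, eq_comm] at h

variable [NeZero n]

lemma sub_iff {h x : G} :
    M.sub h x ↔ M.o (M.R 0 x) (fun j => M.R j h) = M.R 0 h := by
  simp only [sub, le, R_R, eq_comm]

lemma R_o_R_of_sub {h x : G} (hs : M.sub h x) (i : Fin n) :
    M.o (M.R i x) (fun j => M.R j h) = M.R i h := by
  -- By A7, `hs` reads `(R₀ h)[R̄w] = R₀ h` with `w = x[R̄h]`; apply `Rᵢ` (A4), then A7 backwards.
  have h0 : M.o (M.R 0 h) (fun j => M.R j (M.o x fun j => M.R j h)) = M.R 0 h :=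
    (M.A7 0 x _).symm.trans ((M.sub_iff).1 hs)
  have hi := congrArg (M.R i) h0
  rw [M.A4, R_R] at hi
  rw [M.A7 i x]
  exact hi

lemma o_R_o_R_of_sub {h x : G} (hs : M.sub h x) (z : G) :
    M.o (M.o z fun j => M.R j x) (fun j => M.R j h) = M.o z fun j => M.R j h := by
  rw [M.A1]
  simp only [M.R_o_R_of_sub hs]

lemma o_R_mem_of_sub {H : Set G} (hst : M.Stable H) (hvu : M.VUnitary H) {h x y : G}
    (hRh : ∀ i, M.R i h ∈ H) (hs : M.sub h x) (hy : y ∈ H) :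
    M.o y (fun j => M.R j x) ∈ H := by
  refine hvu _ (fun j => M.R j h) ?_ hRh
  rw [M.o_R_o_R_of_sub hs]
  exact hst y _ hy hRh

lemma sub_o_R {hx hy x y : G} (hsx : M.sub hx x) (hsy : M.sub hy y) :
    M.sub (M.o hy fun j => M.R j hx) (M.o y fun j => M.R j x) := by
  rw [sub_iff]
  simp only [M.A4]
  calc M.o (M.o (M.R 0 y) fun j => M.R j x) (fun j => M.o (M.R j hy) fun k => M.R k hx)
      = M.o (M.o (M.o (M.R 0 y) fun j => M.R j x) fun j => M.R j hy) fun j => M.R j hx := by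
        rw [M.A1 _ (fun j => M.R j hy)]
    _ = M.o (M.o (M.R 0 y) fun j => M.R j hx) fun j => M.R j hy := by
        rw [M.A5, M.o_R_o_R_of_sub hsx]
    _ = M.o (M.R 0 hy) fun j => M.R j hx := by
        rw [M.A5, M.R_o_R_of_sub hsy]

end MengerSystem

/-- For a stable v-unitary `H` with `Rᵢ H ⊆ H` and `χ(H) = {x | ∃ h ∈ H, h ⊏ x}`:
(i) `x ∈ χ(H) ∧ y ∈ H → y[R₁x…Rₙx] ∈ H`;
(ii) `x ∈ χ(H) ∧ y ∈ χ(H) → y[R₁x…Rₙx] ∈ χ(H)`. -/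
theorem chiH_conditions {n : ℕ} {G : Type u} [NeZero n] (M : MengerSystem n G)
    (H : Set G)
    (hst : M.Stable H) (hvu : M.VUnitary H)
    (hRH : ∀ i : Fin n, ∀ x ∈ H, M.R i x ∈ H) :
    (∀ x ∈ {x : G | ∃ h ∈ H, M.sub h x}, ∀ y ∈ H,
      M.o y (fun j => M.R j x) ∈ H) ∧
    (∀ x ∈ {x : G | ∃ h ∈ H, M.sub h x}, ∀ y ∈ {x : G | ∃ h ∈ H, M.sub h x},
      M.o y (fun j => M.R j x) ∈ {x : G | ∃ h ∈ H, M.sub h x}) := by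
  constructor
  · rintro x ⟨h, hH, hs⟩ y hy
    exact M.o_R_mem_of_sub hst hvu (fun i => hRH i h hH) hs hy
  · rintro x ⟨hx, hxH, hsx⟩ y ⟨hy, hyH, hsy⟩
    exact ⟨_, hst hy _ hyH fun j => hRH j hx hxH, M.sub_o_R hsx hsy⟩
end
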